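/- (Fourier slice theorem.) Let f : ℝ² → ℝ be a Schwartz function. Then for every σ ∈ ℝ and r ∈ ℝ, ∫_ℝ f̂(σ,μ) e^{−2πirμ} dμ = 𝓕f(−r sin σ, r cos σ), where 𝓕f(ξ) = ∫_{ℝ²} f(x) e^{−2πi⟨x,ξ⟩} dx is the Fourier transform of f. -/

import Mathlib

open Real MeasureTheory

/-- The point `(a, b)` of the Euclidean plane `ℝ²`. -/
noncomputable def pt2 (a b : ℝ) : EuclideanSpace ℝ (Fin 2) :=
  (EuclideanSpace.equiv (Fin 2) ℝ).symm ![a, b]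

/-- The Radon transform `f̂(σ,μ) = ∫_ℝ f(t cos σ − μ sin σ, t sin σ + μ cos σ) dt`. -/
noncomputable def radonE (f : EuclideanSpace ℝ (Fin 2) → ℝ) (σ μ : ℝ) : ℝ :=
  ∫ t : ℝ, f (pt2 (t * Real.cos σ - μ * Real.sin σ) (t * Real.sin σ + μ * Real.cos σ))

/-!
The line `t ↦ t (cos σ, sin σ) + μ (−sin σ, cos σ)` along which `f̂(σ, μ)` integrates is the
rotation by `σ` of the horizontal line at height `μ`. The Fourier transform commutes with
rotations, so it suffices to treat `σ = 0`, and there the claim is Fubini's theorem for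
`e^{−2πirμ} f(t, μ)` in the measure-preserving coordinates `ℝ × ℝ ≃ ℝ²`.
-/

open scoped RealInnerProductSpace FourierTransform

noncomputable def pt2MeasurableEquiv : ℝ × ℝ ≃ᵐ EuclideanSpace ℝ (Fin 2) :=
  MeasurableEquiv.finTwoArrow.symm.trans (MeasurableEquiv.toLp 2 (Fin 2 → ℝ))

theorem pt2MeasurableEquiv_apply (p : ℝ × ℝ) : pt2MeasurableEquiv p = pt2 p.1 p.2 := rfl

theorem measurePreserving_pt2MeasurableEquiv : MeasurePreserving pt2MeasurableEquiv :=
  (PiLp.volume_preserving_toLp (Fin 2)).comp (volume_preserving_finTwoArrow ℝ).symm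

theorem inner_pt2 (a b c d : ℝ) : ⟪pt2 a b, pt2 c d⟫ = a * c + b * d := by
  simp [pt2, PiLp.inner_apply, Fin.sum_univ_two, mul_comm]

theorem fourier_pt2_zero_eq_integral_integral {F : Type*} [NormedAddCommGroup F]
    [NormedSpace ℂ F] (g : EuclideanSpace ℝ (Fin 2) → F) (hg : Integrable g) (r : ℝ) :
    𝓕 g (pt2 0 r) =
      ∫ μ : ℝ, Complex.exp (-2 * π * Complex.I * r * μ) • ∫ t : ℝ, g (pt2 t μ) := by
  have hint : Integrable (fun p ↦ 𝐞 (-⟪pt2MeasurableEquiv p, pt2 0 r⟫) • g (pt2MeasurableEquiv p))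
      (volume.prod volume) :=
    measurePreserving_pt2MeasurableEquiv.integrable_comp_of_integrable
      ((Real.fourierIntegral_convergent_iff _).2 hg)
  rw [Real.fourier_eq, ← measurePreserving_pt2MeasurableEquiv.integral_comp',
    Measure.volume_eq_prod, integral_prod_symm _ hint]
  congr 1 with μ
  simp only [pt2MeasurableEquiv_apply, inner_pt2, ← integral_smul]
  congr 1 with t
  rw [Circle.smul_def, Real.fourierChar_apply]
  congr 2
  push_cast
  ring

noncomputable def planeRotation (σ : ℝ) :
    EuclideanSpace ℝ (Fin 2) ≃ₗᵢ[ℝ] EuclideanSpace ℝ (Fin 2) :=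
  Complex.orthonormalBasisOneI.repr.symm.trans
    ((rotation (Circle.exp σ)).trans Complex.orthonormalBasisOneI.repr)

theorem planeRotation_pt2 (σ a b : ℝ) :
    planeRotation σ (pt2 a b) = pt2 (a * cos σ - b * sin σ) (a * sin σ + b * cos σ) := by
  ext i
  fin_cases i <;>
    simp [planeRotation, pt2, rotation_apply, Circle.coe_exp, Complex.exp_mul_I,
      Complex.cos_ofReal_re, Complex.sin_ofReal_re] <;>
    ring

/-- Fourier slice theorem: the one-dimensional Fourier transform of the Radon transform
`μ ↦ f̂(σ,μ)` at `r` equals the two-dimensional Fourier transform `𝓕f` of `f`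
evaluated at `(−r sin σ, r cos σ)`. -/
theorem statement6 (f : SchwartzMap (EuclideanSpace ℝ (Fin 2)) ℝ) (σ r : ℝ) :
    (∫ μ : ℝ, (radonE (⇑f) σ μ : ℂ) *
        Complex.exp (-2 * (Real.pi : ℂ) * Complex.I * (r : ℂ) * (μ : ℂ)))
      = FourierTransform.fourier (fun x => (f x : ℂ))
          (pt2 (-r * Real.sin σ) (r * Real.cos σ)) := by
  have hξ : pt2 (-r * sin σ) (r * cos σ) = planeRotation σ (pt2 0 r) := by
    simp [planeRotation_pt2]
  have hint : Integrable ((fun x ↦ (f x : ℂ)) ∘ planeRotation σ) :=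
    (planeRotation σ).measurePreserving.integrable_comp_of_integrable f.integrable.ofReal
  rw [hξ, ← Real.fourier_comp_linearIsometry, fourier_pt2_zero_eq_integral_integral _ hint]
  congr 1 with μ
  rw [smul_eq_mul, mul_comm, radonE, ← integral_complex_ofReal]
  simp only [Function.comp_apply, planeRotation_pt2]
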